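/- arXiv:1210.4732 — 8 statements merged into one kernel-verified Lean document; each statement's English description precedes it below -/
import Mathlib

section
/- With N_i as the number of pairs (j1, j2) with j1 + j2 = i, 0 ≤ j1 ≤ 2^(m+1) − 1, 0 ≤ j2 ≤ 2^m − 1, we have N_i odd if and only if i = 2l with 0 ≤ l ≤ 2^(m−1) − 1, or i = 2^(m+1) + 2l with 0 ≤ l ≤ 2^(m−1) − 1. -/
/-!
The pairs with sum `i` are parametrised by their second coordinate, which ranges over an
interval, so `N_i = min (2^m) (i + 1) - (i + 1 - 2^(m+1))` in truncated arithmetic: `i + 1` on the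
rising edge, the constant `2^m` on the plateau and `3·2^m - 1 - i` on the falling edge. As `2^m`
is even for `m ≥ 1`, the odd values are exactly those at even `i` on the two edges.
-/

open Finset

lemma card_filter_add_eq_range_product (a b i : ℕ) :
    #{p ∈ range a ×ˢ range b | p.1 + p.2 = i} = min b (i + 1) - (i + 1 - a) := by
  rw [← Nat.card_Ico (i + 1 - a) (min b (i + 1)), eq_comm]
  refine card_bij (fun j _ => (i - j, j)) ?_ (fun _ _ _ _ h => (Prod.mk.inj h).2) ?_
  · intro j hj
    simp only [mem_Ico, lt_min_iff] at hj
    simp only [mem_filter, mem_product, mem_range]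
    omega
  · rintro ⟨j₁, j₂⟩ hp
    simp only [mem_filter, mem_product, mem_range] at hp
    exact ⟨j₂, by simp only [mem_Ico, lt_min_iff]; omega, by ext <;> simp; omega⟩

lemma odd_min_sub_iff (K i : ℕ) :
    Odd (min (2 * K) (i + 1) - (i + 1 - 4 * K)) ↔
      (∃ l < K, i = 2 * l) ∨ (∃ l < K, i = 4 * K + 2 * l) := by
  rw [Nat.odd_iff]
  constructor
  · intro h
    rcases Nat.lt_or_ge i (4 * K) with hi | hi
    · exact Or.inl ⟨i / 2, by omega, by omega⟩
    · exact Or.inr ⟨(i - 4 * K) / 2, by omega, by omega⟩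
  · rintro (⟨l, hl, rfl⟩ | ⟨l, hl, rfl⟩) <;> omega

theorem stmt_2_general (m : ℕ) (hm : 1 ≤ m)
    (N : ℕ → ℕ)
    (hN : ∀ i, N i = ((Finset.range (2 ^ (m + 1)) ×ˢ Finset.range (2 ^ m)).filter
      (fun p => p.1 + p.2 = i)).card)
    (i : ℕ) :
    Odd (N i) ↔
      (∃ l, l ≤ 2 ^ (m - 1) - 1 ∧ i = 2 * l) ∨
      (∃ l, l ≤ 2 ^ (m - 1) - 1 ∧ i = 2 ^ (m + 1) + 2 * l) := by
  obtain ⟨k, rfl⟩ := Nat.exists_eq_add_of_le' hm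
  have h2m : 2 ^ (k + 1) = 2 * 2 ^ k := pow_succ' 2 k
  have h2m1 : 2 ^ (k + 1 + 1) = 4 * 2 ^ k := by rw [pow_succ, h2m]; ring
  simp_rw [hN, card_filter_add_eq_range_product, h2m, h2m1, odd_min_sub_iff, Nat.add_sub_cancel,
    Nat.le_sub_one_iff_lt (Nat.two_pow_pos k)]

/-- With `N_i` the number of pairs `(j₁, j₂)` with `j₁ + j₂ = i`, `0 ≤ j₁ ≤ 2^(m+1) − 1`,
`0 ≤ j₂ ≤ 2^m − 1`, the number `N_i` is odd if and only if `i = 2l` with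
`0 ≤ l ≤ 2^(m−1) − 1`, or `i = 2^(m+1) + 2l` with `0 ≤ l ≤ 2^(m−1) − 1`. -/
theorem stmt_2 (m : ℕ) (hm : 1 ≤ m)
    (N : ℕ → ℕ)
    (hN : ∀ i, N i = ((Finset.range (2 ^ (m + 1)) ×ˢ Finset.range (2 ^ m)).filter
      (fun p => p.1 + p.2 = i)).card)
    (i : ℕ) (hi : i ≤ 3 * 2 ^ m - 2) :
    Odd (N i) ↔
      (∃ l, l ≤ 2 ^ (m - 1) - 1 ∧ i = 2 * l) ∨
      (∃ l, l ≤ 2 ^ (m - 1) - 1 ∧ i = 2 ^ (m + 1) + 2 * l) :=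
  stmt_2_general m hm N hN i
end

section
/- Let n = 2m and u, v ∈ GF(2^n). Then (u + vz)^((2^m+1)/2) = u^((2^m+1)/2) + (Tr^n_m(u^(2^m) v))^(1/2) z^(1/2) + (vz)^((2^m+1)/2) for all z ∈ GF(2^m), where the exponent (2^m+1)/2 means (2^m+1) times the inverse of 2 modulo 2^n−1, and x^(1/2) denotes the unique square root of x. -/
theorem aux_char2 (m : ℕ) (F : Type*) [Field F] [Fintype F]
    (hcard : Fintype.card F = 2 ^ (2 * m)) : CharP F 2 := by
  obtain ⟨n, hn⟩ := FiniteField.card F (ringChar F)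
  have hp : (ringChar F).Prime := hn.1
  have h2 : ringChar F = 2 := by
    have hdvd : ringChar F ∣ 2 ^ (2 * m) := by
      rw [← hcard, hn.2]; exact dvd_pow_self _ n.pos.ne'
    exact (Nat.prime_dvd_prime_iff_eq hp Nat.prime_two).mp (hp.dvd_of_dvd_pow hdvd)
  rw [← h2]; exact ringChar.charP F

/-- In `GF(2^(2m))`, for `z ∈ GF(2^m)`:
`(u + vz)^((2^m+1)/2) = u^((2^m+1)/2) + (Tr^n_m(u^(2^m) v))^(1/2) z^(1/2) + (vz)^((2^m+1)/2)`,
where the exponent `(2^m+1)/2` is realized as `2^(2m−1) + 2^(m−1)` and the square root of `x`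
is `x^(2^(2m−1))`. -/
theorem stmt_3 (m : ℕ) (hm : 0 < m) (F : Type*) [Field F] [Fintype F]
    (hcard : Fintype.card F = 2 ^ (2 * m))
    (u v z : F) (hz : z ^ (2 ^ m) = z) :
    (u + v * z) ^ (2 ^ (2 * m - 1) + 2 ^ (m - 1)) =
      u ^ (2 ^ (2 * m - 1) + 2 ^ (m - 1)) +
      (u ^ (2 ^ m) * v + (u ^ (2 ^ m) * v) ^ (2 ^ m)) ^ (2 ^ (2 * m - 1)) *
        z ^ (2 ^ (2 * m - 1)) +
      (v * z) ^ (2 ^ (2 * m - 1) + 2 ^ (m - 1)) := by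
  haveI hchar : CharP F 2 := aux_char2 m F hcard
  haveI : Fact (Nat.Prime 2) := ⟨Nat.prime_two⟩
  have h2 : (2 : F) = 0 := by
    have := hchar.cast_eq_zero (R := F)
    exact_mod_cast this
  -- squaring is injective
  have hsq : ∀ a b : F, a ^ 2 = b ^ 2 → a = b := by
    intro a b h
    have hz0 : (a - b) ^ 2 = 0 := by
      have : (a - b) ^ 2 = a ^ 2 - b ^ 2 + 2 * (b ^ 2 - a * b) := by ring
      rw [this, h, h2]; ring
    have := pow_eq_zero_iff (n := 2) (by norm_num) |>.mp hz0
    exact sub_eq_zero.mp this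
  apply hsq
  -- double the exponents
  have he1 : (2 ^ (2 * m - 1) + 2 ^ (m - 1)) * 2 = 2 ^ (2 * m) + 2 ^ m := by
    have h1 : 2 ^ (2 * m - 1) * 2 = 2 ^ (2 * m) := by
      rw [← pow_succ]; congr 1; omega
    have h2 : 2 ^ (m - 1) * 2 = 2 ^ m := by
      rw [← pow_succ]; congr 1; omega
    rw [add_mul, h1, h2]
  have he2 : (2 ^ (2 * m - 1)) * 2 = 2 ^ (2 * m) := by
    rw [← pow_succ]; congr 1; omega
  -- frobenius facts
  have hcardpow : ∀ x : F, x ^ (2 ^ (2 * m)) = x := fun x => by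
    rw [← hcard]; exact FiniteField.pow_card x
  have hfrobadd : ∀ x y : F, (x + y) ^ (2 ^ m) = x ^ (2 ^ m) + y ^ (2 ^ m) :=
    fun x y => add_pow_char_pow x y 2 m
  -- square of sum of three in char 2
  have hsq3 : ∀ a b c : F, (a + b + c) ^ 2 = a ^ 2 + b ^ 2 + c ^ 2 := by
    intro a b c
    have : (a + b + c) ^ 2 = a ^ 2 + b ^ 2 + c ^ 2 + 2 * (a * b + a * c + b * c) := by ring
    rw [this, h2]; ring
  rw [hsq3, ← pow_mul, ← pow_mul, ← pow_mul, mul_pow, ← pow_mul, ← pow_mul, he1, he2]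
  simp only [pow_add, hcardpow]
  rw [hfrobadd, mul_pow, mul_pow, hz]
  have hu : (u ^ (2 ^ m)) ^ (2 ^ m) = u := by
    rw [← pow_mul]
    have h : 2 ^ m * 2 ^ m = 2 ^ (2 * m) := by rw [← pow_add]; congr 1; omega
    rw [h, hcardpow]
  rw [hu]
  ring
end

section
/- Let n = 2m, u, v ∈ GF(2^n)*, and z ∈ GF(2^m). Then (u + vz)^(3(2^m−1)+1) = u^(2^m) v^(2(2^m−1)) + u^2 (u^(2(2^m−1)) + v^(2(2^m−1))) (u + vz)^(2^m − 2) + v^(3·2^m − 2) z, whenever u + vz ≠ 0. -/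
/-! With `w = u + v z` and `q = 2^m`, the Frobenius map gives `w^q = u^q + v^q z` since `z^q = z`.
Multiplying the claimed identity by `w^2` turns `w^(3q-2)` into `(w^q)^3` and `w^(q-2)` into
`w^q`, after which both sides are polynomials in `u, v, z` that agree in characteristic `2`. -/

section CharTwo

variable {R : Type*} [CommRing R] [CharP R 2]

theorem cube_pow_add_pow_mul_eq (a : ℕ) (u v z : R) :
    (u ^ (a + 2) + v ^ (a + 2) * z) ^ 3 =
      (u ^ (a + 2) * v ^ (2 * a + 2) + v ^ (3 * a + 4) * z) * (u + v * z) ^ 2 +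
      u ^ 2 * (u ^ (2 * a + 2) + v ^ (2 * a + 2)) * (u ^ (a + 2) + v ^ (a + 2) * z) := by
  linear_combination
    (u ^ (2 * a + 4) * v ^ (a + 2) * z + u ^ (a + 2) * v ^ (2 * a + 4) * z ^ 2
      - u ^ (a + 4) * v ^ (2 * a + 2) - u ^ (a + 3) * v ^ (2 * a + 3) * z
      - u ^ 2 * v ^ (3 * a + 4) * z - u * v ^ (3 * a + 5) * z ^ 2) * CharTwo.two_eq_zero (R := R)

theorem pow_three_mul_pred_add_one_eq [IsDomain R] {q : ℕ} (hq : 2 ≤ q) {u v z : R}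
    (hw : (u + v * z) ^ q = u ^ q + v ^ q * z) (hne : u + v * z ≠ 0) :
    (u + v * z) ^ (3 * (q - 1) + 1) =
      u ^ q * v ^ (2 * (q - 1)) +
      u ^ 2 * (u ^ (2 * (q - 1)) + v ^ (2 * (q - 1))) * (u + v * z) ^ (q - 2) +
      v ^ (3 * q - 2) * z := by
  obtain ⟨a, rfl⟩ := Nat.exists_eq_add_of_le' hq
  rw [show 3 * (a + 2 - 1) + 1 = 3 * a + 4 by omega, show 2 * (a + 2 - 1) = 2 * a + 2 by omega,
    show a + 2 - 2 = a by omega, show 3 * (a + 2) - 2 = 3 * a + 4 by omega]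
  apply mul_right_cancel₀ (pow_ne_zero 2 hne)
  calc (u + v * z) ^ (3 * a + 4) * (u + v * z) ^ 2 = ((u + v * z) ^ (a + 2)) ^ 3 := by ring
    _ = (u ^ (a + 2) + v ^ (a + 2) * z) ^ 3 := by rw [hw]
    _ = _ := cube_pow_add_pow_mul_eq a u v z
    _ = _ := by rw [← hw]; ring

end CharTwo

theorem stmt_4_general (m : ℕ) (hm : 0 < m) (F : Type*) [Field F] [Fintype F]
    (hcard : Fintype.card F = 2 ^ (2 * m))
    (u v z : F) (hz : z ^ (2 ^ m) = z)
    (huvz : u + v * z ≠ 0) :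
    (u + v * z) ^ (3 * (2 ^ m - 1) + 1) =
      u ^ (2 ^ m) * v ^ (2 * (2 ^ m - 1)) +
      u ^ 2 * (u ^ (2 * (2 ^ m - 1)) + v ^ (2 * (2 ^ m - 1))) * (u + v * z) ^ (2 ^ m - 2) +
      v ^ (3 * 2 ^ m - 2) * z := by
  have : Fact (Nat.Prime 2) := ⟨Nat.prime_two⟩
  have : CharP F 2 := charP_of_card_eq_prime_pow hcard
  refine pow_three_mul_pred_add_one_eq (Nat.le_self_pow hm.ne' 2) ?_ huvz
  rw [add_pow_char_pow, mul_pow, hz]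

/-- In `GF(2^(2m))`, for `u, v ≠ 0`, `z ∈ GF(2^m)` and `u + vz ≠ 0`:
`(u + vz)^(3(2^m−1)+1) = u^(2^m) v^(2(2^m−1))
  + u² (u^(2(2^m−1)) + v^(2(2^m−1))) (u + vz)^(2^m − 2) + v^(3·2^m − 2) z`. -/
theorem stmt_4 (m : ℕ) (hm : 0 < m) (F : Type*) [Field F] [Fintype F]
    (hcard : Fintype.card F = 2 ^ (2 * m))
    (u v z : F) (hu : u ≠ 0) (hv : v ≠ 0) (hz : z ^ (2 ^ m) = z)
    (huvz : u + v * z ≠ 0) :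
    (u + v * z) ^ (3 * (2 ^ m - 1) + 1) =
      u ^ (2 ^ m) * v ^ (2 * (2 ^ m - 1)) +
      u ^ 2 * (u ^ (2 * (2 ^ m - 1)) + v ^ (2 * (2 ^ m - 1))) * (u + v * z) ^ (2 ^ m - 2) +
      v ^ (3 * 2 ^ m - 2) * z :=
  stmt_4_general m hm F hcard u v z hz huvz
end

section
/- Let m ≡ 2 (mod 4), n = 2m, u ∈ F_16 \ F_4 with u^5 = 1, w = u + u^(2^m) ∈ F_4 \ {0,1}, b ∈ GF(2^n)* and a = b^(2^m + 1). Set s so that s·Tr^n_m(b(u^4+1)) = w^2 Tr^n_m(b(u+1)) (assuming Tr^n_m(b(u^4+1)) ≠ 0). Then (w + s^2 + s)·(Tr^n_m(b(u^4+1)))^2 = a w. -/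
/-!
Since `u⁵ = 1` and `2^m ≡ 4 (mod 5)`, the Frobenius `x ↦ x^(2^m)` swaps `u` and `u⁴`, so with
`B = b^(2^m)` the two traces are `T₁ = b(u⁴+1) + B(u+1)` and `T₂ = b(u+1) + B(u⁴+1)`.
In characteristic 2, `T₁² + T₂² = (b² + B²)w²`, `T₁T₂ = (b² + B²)w + bBw²` and `w⁴ = w`; hence
`(w + s² + s)T₁² = wT₁² + (sT₁)² + (sT₁)T₁ = w(T₁² + T₂²) + w²T₁T₂ = bBw⁴ = aw`.
-/

lemma pow_two_pow_eq_pow_four {M : Type*} [Monoid M] {u : M} (hu : u ^ 5 = 1) {m : ℕ}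
    (hm : m % 4 = 2) : u ^ 2 ^ m = u ^ 4 := by
  obtain ⟨k, rfl⟩ : ∃ k, m = 4 * k + 2 := ⟨m / 4, by omega⟩
  rw [pow_eq_pow_mod _ hu, pow_add, pow_mul, Nat.mul_mod, Nat.pow_mod]
  norm_num

lemma pow_sixteen_eq_self {M : Type*} [Monoid M] {u : M} (hu : u ^ 5 = 1) : u ^ 16 = u := by
  rw [pow_eq_pow_mod _ hu, pow_one]

section CharTwo

variable {R : Type*} [CommRing R] [CharP R 2] {u : R}

lemma add_pow_four_pow_four_eq_self (hu : u ^ 5 = 1) : (u + u ^ 4) ^ 4 = u + u ^ 4 := by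
  rw [show 4 = 2 ^ 2 from rfl, add_pow_char_pow, ← pow_mul, show 2 ^ 2 * 2 ^ 2 = 16 from rfl,
    pow_sixteen_eq_self hu, add_comm]

variable (b B : R)

lemma sq_add_sq_traces :
    (b * (u ^ 4 + 1) + B * (u + 1)) ^ 2 + (b * (u + 1) + B * (u ^ 4 + 1)) ^ 2
      = (b ^ 2 + B ^ 2) * (u + u ^ 4) ^ 2 := by
  linear_combination (2 * b * B * (u + 1) * (u ^ 4 + 1) + (b ^ 2 + B ^ 2) * (1 + u + u ^ 4 - u ^ 5))
    * CharTwo.two_eq_zero (R := R)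

lemma mul_traces (hu : u ^ 5 = 1) :
    (b * (u ^ 4 + 1) + B * (u + 1)) * (b * (u + 1) + B * (u ^ 4 + 1))
      = (b ^ 2 + B ^ 2) * (u + u ^ 4) + b * B * (u + u ^ 4) ^ 2 := by
  linear_combination (b ^ 2 + B ^ 2) * hu
    + (b ^ 2 + B ^ 2 + b * B * (1 + u + u ^ 4 - u ^ 5)) * CharTwo.two_eq_zero (R := R)

lemma norm_mul_of_trace_relation {s : R} (hu : u ^ 5 = 1)
    (hs : s * (b * (u ^ 4 + 1) + B * (u + 1))
      = (u + u ^ 4) ^ 2 * (b * (u + 1) + B * (u ^ 4 + 1))) :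
    (u + u ^ 4 + s ^ 2 + s) * (b * (u ^ 4 + 1) + B * (u + 1)) ^ 2 = b * B * (u + u ^ 4) := by
  have hw4 := add_pow_four_pow_four_eq_self hu
  set w := u + u ^ 4
  set T := b * (u ^ 4 + 1) + B * (u + 1)
  set T' := b * (u + 1) + B * (u ^ 4 + 1)
  calc (w + s ^ 2 + s) * T ^ 2 = w * T ^ 2 + (s * T) ^ 2 + (s * T) * T := by ring
    _ = w * (T ^ 2 + T' ^ 2) + w ^ 2 * (T * T') := by rw [hs]; linear_combination T' ^ 2 * hw4
    _ = b * B * w ^ 4 := by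
      rw [sq_add_sq_traces, mul_traces b B hu]
      linear_combination (b ^ 2 + B ^ 2) * w ^ 3 * CharTwo.two_eq_zero (R := R)
    _ = b * B * w := by rw [hw4]

end CharTwo

theorem stmt_13_general (m : ℕ) (hm : m % 4 = 2) (F : Type*) [Field F] [Fintype F]
    (hcard : Fintype.card F = 2 ^ (2 * m))
    (u : F) (hu5 : u ^ 5 = 1)
    (w : F) (hw : w = u + u ^ (2 ^ m))
    (b : F) (a : F) (ha : a = b ^ (2 ^ m + 1))
    (s : F)
    (hs : s * (b * (u ^ 4 + 1) + (b * (u ^ 4 + 1)) ^ (2 ^ m)) =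
      w ^ 2 * (b * (u + 1) + (b * (u + 1)) ^ (2 ^ m))) :
    (w + s ^ 2 + s) * (b * (u ^ 4 + 1) + (b * (u ^ 4 + 1)) ^ (2 ^ m)) ^ 2 = a * w := by
  have : CharP F 2 := charP_of_card_eq_prime_pow hcard
  have hum : u ^ 2 ^ m = u ^ 4 := pow_two_pow_eq_pow_four hu5 hm
  have hu4m : (u ^ 4) ^ 2 ^ m = u := by
    rw [← pow_mul, mul_comm, pow_mul, hum, ← pow_mul, pow_sixteen_eq_self hu5]
  subst hw ha
  simp only [mul_pow, add_pow_char_pow, one_pow, hum, hu4m] at hs ⊢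
  rw [pow_succ' b]
  exact norm_mul_of_trace_relation b (b ^ 2 ^ m) hu5 hs

/-- Let `m ≡ 2 (mod 4)`, `n = 2m`, `u ∈ F₁₆ \ F₄` with `u⁵ = 1`, `w = u + u^(2^m)`,
`b ∈ GF(2^n)*` and `a = b^(2^m+1)`. If `s` satisfies
`s·Tr^n_m(b(u⁴+1)) = w² Tr^n_m(b(u+1))` with `Tr^n_m(b(u⁴+1)) ≠ 0`, then
`(w + s² + s)·(Tr^n_m(b(u⁴+1)))² = a·w`. -/
theorem stmt_13 (m : ℕ) (hm : m % 4 = 2) (F : Type*) [Field F] [Fintype F]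
    (hcard : Fintype.card F = 2 ^ (2 * m))
    (u : F) (hu16 : u ^ (2 ^ 4) = u) (hu4 : u ^ (2 ^ 2) ≠ u) (hu5 : u ^ 5 = 1)
    (w : F) (hw : w = u + u ^ (2 ^ m))
    (b : F) (hb : b ≠ 0) (a : F) (ha : a = b ^ (2 ^ m + 1))
    (hT : b * (u ^ 4 + 1) + (b * (u ^ 4 + 1)) ^ (2 ^ m) ≠ 0)
    (s : F)
    (hs : s * (b * (u ^ 4 + 1) + (b * (u ^ 4 + 1)) ^ (2 ^ m)) =
      w ^ 2 * (b * (u + 1) + (b * (u + 1)) ^ (2 ^ m))) :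
    (w + s ^ 2 + s) * (b * (u ^ 4 + 1) + (b * (u ^ 4 + 1)) ^ (2 ^ m)) ^ 2 = a * w :=
  stmt_13_general m hm F hcard u hu5 w hw b a ha s hs
end

section
/- Let m ≡ 2 (mod 4), n = 2m, u ∈ F_16 \ F_4 with u^5 = 1. For every s ∈ GF(2^m) there exists b ∈ GF(2^n)* with b^(2^m − 1) ≠ u^4 such that s·Tr^n_m(b(u^4 + 1)) = w^2·Tr^n_m(b(u + 1)), where w = u + u^4. Equivalently, the equation b(u^4 s + s + u^4 + u^2) = b^(2^m)(u s + s + u^3 + u) has a solution b ∈ GF(2^n)*. -/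
/-!
Write `σ x = x ^ 2 ^ m`, a field automorphism of `F` in characteristic two. Since `2` has
order `4` modulo `5` and `m ≡ 2 (mod 4)`, `σ` swaps `u` and `u⁴`, and it fixes `s` and `w`.
The equation then reads `b · A = σ b · σ A` with `A = s (u⁴ + 1) + w² (u + 1)`, so `b = A⁻¹`
solves it. The identity `A + u⁴ σ A = w² (u + 1) (u³ + 1)`, whose right side is nonzero because
`u⁴ ≠ u`, shows both that `A ≠ 0` and that `σ b ≠ u⁴ b`.
-/

theorem Nat.two_pow_mod_five (m : ℕ) : 2 ^ m % 5 = 2 ^ (m % 4) % 5 := by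
  conv_lhs => rw [← Nat.div_add_mod m 4, pow_add, pow_mul, Nat.mul_mod, Nat.pow_mod]
  norm_num

theorem pow_two_pow_of_pow_five_eq_one {M : Type*} [Monoid M] {u : M} (hu5 : u ^ 5 = 1)
    {m : ℕ} (hm : m % 4 = 2) : u ^ 2 ^ m = u ^ 4 := by
  rw [pow_eq_pow_mod _ hu5, Nat.two_pow_mod_five, hm]
  norm_num

section Twist

variable {R : Type*} [Semiring R] (σ : R →+* R) {u s c : R}

theorem map_pow_four_of_map_eq_pow_four (hσu : σ u = u ^ 4) (hu5 : u ^ 5 = 1) :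
    σ (u ^ 4) = u := by
  rw [map_pow, hσu, ← pow_mul, show 4 * 4 = 5 * 3 + 1 by rfl, pow_succ, pow_mul, hu5, one_pow,
    one_mul]

theorem map_twisted_coeff (hσu : σ u = u ^ 4) (hu5 : u ^ 5 = 1) (hs : σ s = s) (hc : σ c = c) :
    σ (s * (u ^ 4 + 1) + c * (u + 1)) = s * (u + 1) + c * (u ^ 4 + 1) := by
  simp only [map_add, map_mul, map_one, hs, hc, hσu, map_pow_four_of_map_eq_pow_four σ hσu hu5]

end Twist

namespace CharTwo

section Ring

variable {R : Type*} [Ring R] [CharP R 2] {u : R}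

theorem add_one_ne_zero_of_pow_four_ne (hu4 : u ^ 4 ≠ u) : u + 1 ≠ 0 := by
  rw [Ne, CharTwo.add_eq_zero]
  rintro rfl
  exact hu4 (one_pow 4)

theorem pow_three_add_one_ne_zero_of_pow_four_ne (hu4 : u ^ 4 ≠ u) : u ^ 3 + 1 ≠ 0 := by
  rw [Ne, CharTwo.add_eq_zero]
  intro h
  exact hu4 (by rw [pow_succ', h, mul_one])

theorem add_pow_four_ne_zero_of_pow_four_ne (hu4 : u ^ 4 ≠ u) : u + u ^ 4 ≠ 0 := by
  rw [Ne, CharTwo.add_eq_zero]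
  exact hu4.symm

end Ring

theorem twisted_coeff_add_pow_four_mul_map {R : Type*} [CommRing R] [CharP R 2] (σ : R →+* R)
    {u s c : R} (hσu : σ u = u ^ 4) (hu5 : u ^ 5 = 1) (hs : σ s = s) (hc : σ c = c) :
    s * (u ^ 4 + 1) + c * (u + 1) + u ^ 4 * σ (s * (u ^ 4 + 1) + c * (u + 1)) =
      c * (u + 1) * (u ^ 3 + 1) := by
  rw [map_twisted_coeff σ hσu hu5 hs hc]
  linear_combination (s + c * u ^ 3) * hu5 + s * (u ^ 4 + 1) * CharTwo.two_eq_zero (R := R)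

variable {F : Type*} [Field F] [CharP F 2] (σ : F →+* F) {u s c : F}

theorem exists_twisted_solution (hσu : σ u = u ^ 4) (hu5 : u ^ 5 = 1) (hu4 : u ^ 4 ≠ u)
    (hs : σ s = s) (hc : σ c = c) (hc0 : c ≠ 0) :
    ∃ b ≠ 0, σ b ≠ u ^ 4 * b ∧
      s * (b * (u ^ 4 + 1) + σ (b * (u ^ 4 + 1))) = c * (b * (u + 1) + σ (b * (u + 1))) := by
  have hσA := map_twisted_coeff σ hσu hu5 hs hc
  have hkey := twisted_coeff_add_pow_four_mul_map σ hσu hu5 hs hc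
  generalize hA : s * (u ^ 4 + 1) + c * (u + 1) = A at hσA hkey
  have hkey_ne : c * (u + 1) * (u ^ 3 + 1) ≠ 0 :=
    mul_ne_zero (mul_ne_zero hc0 (add_one_ne_zero_of_pow_four_ne hu4))
      (pow_three_add_one_ne_zero_of_pow_four_ne hu4)
  have hA0 : A ≠ 0 := by
    rintro rfl
    rw [map_zero, mul_zero, add_zero] at hkey
    exact hkey_ne hkey.symm
  have hσA0 : σ A ≠ 0 := (map_ne_zero σ).mpr hA0
  have hA1 : A * A⁻¹ = 1 := mul_inv_cancel₀ hA0
  have hσA1 : σ A * (σ A)⁻¹ = 1 := mul_inv_cancel₀ hσA0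
  refine ⟨A⁻¹, inv_ne_zero hA0, ?_, ?_⟩
  · rw [map_inv₀]
    intro h
    have hAσA : A = u ^ 4 * σ A := by
      linear_combination (A * σ A) * h - A * hσA1 + u ^ 4 * σ A * hA1
    apply hkey_ne
    rw [← hkey, ← hAσA, CharTwo.add_self_eq_zero]
  · -- in characteristic two the equation says `A⁻¹ * A = σ A⁻¹ * σ A`
    simp only [map_mul, map_add, map_one, map_inv₀, hσu,
      map_pow_four_of_map_eq_pow_four σ hσu hu5]
    linear_combination hσA1 - hA1 + (σ A)⁻¹ * hσA - A⁻¹ * hA +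
      (s * (σ A)⁻¹ * (u + 1) + s * A⁻¹ * (u ^ 4 + 1) - σ A * (σ A)⁻¹) *
        CharTwo.two_eq_zero (R := F)

end CharTwo

theorem stmt_14_general (m : ℕ) (hm : m % 4 = 2) (F : Type*) [Field F] [Fintype F]
    (hcard : Fintype.card F = 2 ^ (2 * m))
    (u : F) (hu4 : u ^ (2 ^ 2) ≠ u) (hu5 : u ^ 5 = 1)
    (w : F) (hw : w = u + u ^ 4) :
    ∀ s : F, s ^ (2 ^ m) = s →
      ∃ b : F, b ≠ 0 ∧ b ^ (2 ^ m - 1) ≠ u ^ 4 ∧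
        s * (b * (u ^ 4 + 1) + (b * (u ^ 4 + 1)) ^ (2 ^ m)) =
          w ^ 2 * (b * (u + 1) + (b * (u + 1)) ^ (2 ^ m)) := by
  intro s hs
  have : CharP F 2 := charP_of_card_eq_prime_pow hcard
  have hσ (x : F) : iterateFrobenius F 2 m x = x ^ 2 ^ m := rfl
  replace hu4 : u ^ 4 ≠ u := hu4
  have hσu : iterateFrobenius F 2 m u = u ^ 4 := by rw [hσ, pow_two_pow_of_pow_five_eq_one hu5 hm]
  have hσw : iterateFrobenius F 2 m (w ^ 2) = w ^ 2 := by
    rw [hw, map_pow, map_add, hσu, map_pow_four_of_map_eq_pow_four _ hσu hu5, add_comm]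
  have hw0 : w ^ 2 ≠ 0 :=
    pow_ne_zero 2 (hw ▸ CharTwo.add_pow_four_ne_zero_of_pow_four_ne hu4)
  obtain ⟨b, hb0, hσb, hb⟩ := CharTwo.exists_twisted_solution (iterateFrobenius F 2 m) hσu hu5
    hu4 ((hσ s).trans hs) hσw hw0
  refine ⟨b, hb0, fun h => hσb ?_, by simpa only [hσ] using hb⟩
  rw [hσ, ← h, ← pow_succ, Nat.sub_add_cancel Nat.one_le_two_pow]

/-- Let `m ≡ 2 (mod 4)`, `n = 2m`, `u ∈ F₁₆ \ F₄` with `u⁵ = 1` and `w = u + u⁴`.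
For every `s ∈ GF(2^m)` there exists `b ∈ GF(2^n)*` with `b^(2^m − 1) ≠ u⁴` such that
`s·Tr^n_m(b(u⁴ + 1)) = w²·Tr^n_m(b(u + 1))`. -/
theorem stmt_14 (m : ℕ) (hm : m % 4 = 2) (F : Type*) [Field F] [Fintype F]
    (hcard : Fintype.card F = 2 ^ (2 * m))
    (u : F) (hu16 : u ^ (2 ^ 4) = u) (hu4 : u ^ (2 ^ 2) ≠ u) (hu5 : u ^ 5 = 1)
    (w : F) (hw : w = u + u ^ 4) :
    ∀ s : F, s ^ (2 ^ m) = s →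
      ∃ b : F, b ≠ 0 ∧ b ^ (2 ^ m - 1) ≠ u ^ 4 ∧
        s * (b * (u ^ 4 + 1) + (b * (u ^ 4 + 1)) ^ (2 ^ m)) =
          w ^ 2 * (b * (u + 1) + (b * (u + 1)) ^ (2 ^ m)) :=
  stmt_14_general m hm F hcard u hu4 hu5 w hw
end

section
/- Let m ≡ 0 (mod 4), n = 2m, and u ∈ GF(2^n) \ GF(2^m) with u^(2^m+1) = 1; set w = u + u^(2^m). Then w^2 + w + 1 ≠ 0. -/
/-!
Since `u ^ (2 ^ m) = u⁻¹`, we have `w = u + u⁻¹`, and in characteristic 2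
`u ^ 2 * (w ^ 2 + w + 1) = u ^ 4 + u ^ 3 + u ^ 2 + u + 1`. So `w ^ 2 + w + 1 = 0` would force
`u ^ 5 = 1`. But `4 ∣ m` gives `2 ^ m = 16 ^ (m / 4) ≡ 1 [MOD 5]`, hence `u ^ (2 ^ m) = u`.
-/

lemma CharTwo.pow_five_eq_one_of_add_inv_sq_add_self_add_one_eq_zero {K : Type*} [Field K]
    [CharP K 2] {u : K} (hu : u ≠ 0) (h : (u + u⁻¹) ^ 2 + (u + u⁻¹) + 1 = 0) : u ^ 5 = 1 := by
  have hcyc : u ^ 4 + u ^ 3 + u ^ 2 + u + 1 = 0 := by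
    have htwo : (2 : K) = 0 := CharTwo.two_eq_zero
    field_simp at h
    linear_combination h - u ^ 2 * htwo
  linear_combination (u - 1) * hcyc

lemma Nat.two_pow_modEq_one_five {m : ℕ} (hm : 4 ∣ m) : 2 ^ m ≡ 1 [MOD 5] := by
  obtain ⟨k, rfl⟩ := hm
  simpa [pow_mul] using (show 16 ≡ 1 [MOD 5] by decide).pow k

theorem stmt_15_general (m : ℕ) (hm : m % 4 = 0) (F : Type*) [Field F] [Fintype F]
    (hcard : Fintype.card F = 2 ^ (2 * m))
    (u : F) (hu : u ^ (2 ^ m) ≠ u) (hu1 : u ^ (2 ^ m + 1) = 1)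
    (w : F) (hw : w = u + u ^ (2 ^ m)) :
    w ^ 2 + w + 1 ≠ 0 := by
  intro h
  have : CharP F 2 := charP_of_card_eq_prime_pow hcard
  have hu0 : u ≠ 0 := by
    rintro rfl
    simp at hu1
  have hinv : u ^ (2 ^ m) = u⁻¹ := eq_inv_of_mul_eq_one_left (by rwa [pow_succ] at hu1)
  have h5 : u ^ 5 = 1 :=
    CharTwo.pow_five_eq_one_of_add_inv_sq_add_self_add_one_eq_zero hu0 (by rwa [hw, hinv] at h)
  apply hu
  rw [pow_eq_pow_mod _ h5, Nat.two_pow_modEq_one_five (Nat.dvd_of_mod_eq_zero hm), pow_one]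

/-- Let `m ≡ 0 (mod 4)`, `n = 2m`, and `u ∈ GF(2^n) \ GF(2^m)` with `u^(2^m+1) = 1`;
set `w = u + u^(2^m)`. Then `w² + w + 1 ≠ 0`. -/
theorem stmt_15 (m : ℕ) (hm0 : 0 < m) (hm : m % 4 = 0) (F : Type*) [Field F] [Fintype F]
    (hcard : Fintype.card F = 2 ^ (2 * m))
    (u : F) (hu : u ^ (2 ^ m) ≠ u) (hu1 : u ^ (2 ^ m + 1) = 1)
    (w : F) (hw : w = u + u ^ (2 ^ m)) :
    w ^ 2 + w + 1 ≠ 0 :=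
  stmt_15_general m hm F hcard u hu hu1 w hw
end

section
/- Let m be even, n = 2m, l = (2^m − 1)/3, d = (2^(m−1)+1)l + 1, u ∈ GF(2^n) with u^(2^m+1) = 1 and u ∉ GF(2^m). Then for all z ∈ GF(2^m) with z ≠ u, u^(-1): Tr^n_m((z + u)^(2d)) = Tr^n_m((z + u)^(2l)) / (z^2 + Tr^n_m(u)·z + 1)^(l − 1). -/
/-!
Write `q = 2^m` and `w = z + u`. Frobenius gives `w^q = z + u⁻¹`, so the denominator is the norm
`N = w^(q+1)`. Since `q = 3l + 1` and `2d = (q+1)l + l + 2`, the two trace terms of `w^(2d)`,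
multiplied by `N^(l-1)`, have exponents `2lq` and `(l+1)q² + l - 1`; as `w^(q²) = w` they become
`(w^(2l))^q` and `w^(2l)`, the two trace terms of `w^(2l)` in the opposite order.
-/

section Exponents

variable {M : Type*} [Monoid M] {q l : ℕ}

theorem pow_mul_pow_succ_pow_pred (hq : q = 3 * l + 1) (hl : 1 ≤ l) (w : M) :
    w ^ ((q + 1) * l + l + 2) * (w ^ (q + 1)) ^ (l - 1) = (w ^ (2 * l)) ^ q := by
  obtain ⟨k, rfl⟩ := Nat.exists_eq_add_of_le' hl
  subst hq
  simp only [← pow_mul, ← pow_add, Nat.add_sub_cancel]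
  ring_nf

theorem pow_pow_mul_pow_succ_pow_pred (hq : q = 3 * l + 1) (hl : 1 ≤ l) {w : M}
    (hw : w ^ q ^ 2 = w) :
    (w ^ ((q + 1) * l + l + 2)) ^ q * (w ^ (q + 1)) ^ (l - 1) = w ^ (2 * l) := by
  obtain ⟨k, rfl⟩ := Nat.exists_eq_add_of_le' hl
  calc _ = (w ^ q ^ 2) ^ (k + 2) * w ^ k := by
        subst hq
        simp only [← pow_mul, ← pow_add, Nat.add_sub_cancel]
        ring_nf
    _ = w ^ (2 * (k + 1)) := by rw [hw, ← pow_add]; ring_nf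

end Exponents

theorem add_pow_expChar_pow_succ_eq_quadratic {F : Type*} [Field F] {p : ℕ} [ExpChar F p]
    {n : ℕ} {z u : F} (hz : z ^ p ^ n = z) (hu : u ^ (p ^ n + 1) = 1) :
    (z + u) ^ (p ^ n + 1) = z ^ 2 + (u + u ^ p ^ n) * z + 1 := by
  have hu0 : u ≠ 0 := by rintro rfl; simp at hu
  have huq : u ^ p ^ n = u⁻¹ := eq_inv_of_mul_eq_one_left (by rwa [← pow_succ])
  rw [pow_succ, add_pow_expChar_pow, hz, huq]
  field_simp
  ring

theorem stmt_18_general (m : ℕ) (hm0 : 0 < m) (F : Type*) [Field F] [Fintype F]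
    (hcard : Fintype.card F = 2 ^ (2 * m))
    (l : ℕ) (hl : 3 * l = 2 ^ m - 1)
    (d : ℕ) (hd : d = (2 ^ (m - 1) + 1) * l + 1)
    (u : F) (hu1 : u ^ (2 ^ m + 1) = 1) :
    ∀ z : F, z ^ (2 ^ m) = z → z ≠ u → z ≠ u⁻¹ →
      (z + u) ^ (2 * d) + ((z + u) ^ (2 * d)) ^ (2 ^ m) =
        ((z + u) ^ (2 * l) + ((z + u) ^ (2 * l)) ^ (2 ^ m)) /
          (z ^ 2 + (u + u ^ (2 ^ m)) * z + 1) ^ (l - 1) := by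
  intro z hz hzu _
  have : CharP F 2 := charP_of_card_eq_prime_pow hcard
  have hq2 : 2 ≤ 2 ^ m := Nat.le_self_pow hm0.ne' 2
  have hq : 2 ^ m = 3 * l + 1 := by omega
  have hl1 : 1 ≤ l := by omega
  have h2d : 2 * d = (2 ^ m + 1) * l + l + 2 := by
    have : 2 ^ m = 2 * 2 ^ (m - 1) := by rw [← pow_succ']; congr 1; omega
    rw [hd, this]; ring
  have hfrob : (z + u) ^ (2 ^ m) ^ 2 = z + u := by
    rw [← pow_mul, mul_comm, ← hcard, FiniteField.pow_card]
  have hw0 : z + u ≠ 0 := fun h => hzu (CharTwo.add_eq_zero.mp h)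
  rw [← add_pow_expChar_pow_succ_eq_quadratic hz hu1,
    eq_div_iff (pow_ne_zero _ (pow_ne_zero _ hw0)), h2d, add_mul,
    pow_mul_pow_succ_pow_pred hq hl1, pow_pow_mul_pow_succ_pow_pred hq hl1 hfrob,
    add_comm]

/-- Let `m` be even, `n = 2m`, `l = (2^m − 1)/3`, `d = (2^(m−1)+1)l + 1`,
`u ∈ GF(2^n) \ GF(2^m)` with `u^(2^m+1) = 1`. Then for all `z ∈ GF(2^m)` with
`z ≠ u, u⁻¹`:
`Tr^n_m((z + u)^(2d)) = Tr^n_m((z + u)^(2l)) / (z² + Tr^n_m(u)·z + 1)^(l − 1)`. -/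
theorem stmt_18 (m : ℕ) (hm0 : 0 < m) (hm : Even m) (F : Type*) [Field F] [Fintype F]
    (hcard : Fintype.card F = 2 ^ (2 * m))
    (l : ℕ) (hl : 3 * l = 2 ^ m - 1)
    (d : ℕ) (hd : d = (2 ^ (m - 1) + 1) * l + 1)
    (u : F) (hu1 : u ^ (2 ^ m + 1) = 1) (hu : u ^ (2 ^ m) ≠ u) :
    ∀ z : F, z ^ (2 ^ m) = z → z ≠ u → z ≠ u⁻¹ →
      (z + u) ^ (2 * d) + ((z + u) ^ (2 * d)) ^ (2 ^ m) =
        ((z + u) ^ (2 * l) + ((z + u) ^ (2 * l)) ^ (2 ^ m)) /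
          (z ^ 2 + (u + u ^ (2 ^ m)) * z + 1) ^ (l - 1) :=
  stmt_18_general m hm0 F hcard l hl d hd u hu1
end

section
/- Let n = 2m, u ∈ GF(2^n) with u^(2^m+1) = 1 and u ∉ GF(2^m), w = u + u^(2^m), b ∈ GF(2^n)*, a = b^(2^m+1), c = a^(1/2) + Tr^n_m(b·u^(2^m)). Then for all z ∈ GF(2^m) with z^2 + wz + 1 ≠ 0: c + (awz)^(1/2) + b w^2 (u^(2^m) + z)/(u + z)^2 + b^(2^m) w^2 (u + z)/(u^(2^m) + z)^2 = a^(1/2) + Tr^n_m(b^(2^m) u^5) + (awz)^(1/2) + [Tr^n_m(b^(2^m)(u^5+u)) z^4 + Tr^n_m(b) w^2 z^3 + Tr^n_m(b^(2^m) u^5) w^2 z^2 + Tr^n_m(b^(2^m)(u^4+1)) z] / (z^2 + wz + 1)^2. -/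
/-!
Write `q = 2^m`, `v = u^q` and `B = b^q`. Since `|F| = q²`, the map `x ↦ x^q` is an additive
involution, so every trace `Tr(x) = x + x^q` occurring in the statement is a symmetric
expression in `(u, b)` and `(v, B)`, and `uv = 1` gives `z² + wz + 1 = (u + z)(v + z)`.
Both sides are then linear in `b` and `B`, the `B`-part being the `b`-part with `u` and `v`
exchanged, so everything reduces to a single identity in `u, v, z` over a field of
characteristic two.
-/

theorem FiniteField.pow_pow_eq_self_of_card_eq_sq {F : Type*} [Field F] [Fintype F] {q : ℕ}
    (hcard : Fintype.card F = q ^ 2) (x : F) : (x ^ q) ^ q = x := by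
  rw [← pow_mul, ← sq, ← hcard, FiniteField.pow_card]

theorem CharTwo.mul_sq_add_sq_mul_cube_of_mul_eq_one {R : Type*} [CommRing R] [CharP R 2]
    {u v : R} (huv : u * v = 1) (z : R) :
    v * ((u + z) * (v + z)) ^ 2 + (u + v) ^ 2 * (v + z) ^ 3 =
      v ^ 5 * ((u + z) * (v + z)) ^ 2 +
        ((v ^ 5 + v) * z ^ 4 + (u + v) ^ 2 * z ^ 3 + v ^ 5 * (u + v) ^ 2 * z ^ 2 +
          (v ^ 4 + 1) * z) := by
  have h2 : (2 : R) = 0 := CharTwo.two_eq_zero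
  have hD : ((u + z) * (v + z)) ^ 2 = z ^ 4 + (u + v) ^ 2 * z ^ 2 + 1 := by
    linear_combination (u * v + 1) * huv +
      (z ^ 3 * (u + v) + u * v * z ^ 2 + (u + v) * z * u * v) * h2
  rw [hD]
  linear_combination (u * v + 1) * (z + v) * huv +
    (2 * v * (u + v) ^ 2 * z ^ 2 + (u * v ^ 3 + v ^ 2 * (u + v) ^ 2) * z + v + v ^ 5 + u * v ^ 4 -
      v ^ 5 * (z ^ 4 + (u + v) ^ 2 * z ^ 2 + 1)) * h2

theorem CharTwo.add_sq_mul_div_sq_eq_of_mul_eq_one {K : Type*} [Field K] [CharP K 2]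
    {u v z : K} (huv : u * v = 1) (hu : u + z ≠ 0) (hv : v + z ≠ 0) :
    v + (u + v) ^ 2 * (v + z) / (u + z) ^ 2 =
      v ^ 5 + ((v ^ 5 + v) * z ^ 4 + (u + v) ^ 2 * z ^ 3 + v ^ 5 * (u + v) ^ 2 * z ^ 2 +
        (v ^ 4 + 1) * z) / (z ^ 2 + (u + v) * z + 1) ^ 2 := by
  rw [show z ^ 2 + (u + v) * z + 1 = (u + z) * (v + z) by linear_combination -huv]
  field_simp
  linear_combination CharTwo.mul_sq_add_sq_mul_cube_of_mul_eq_one huv z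

theorem stmt_19_general (m : ℕ) (F : Type*) [Field F] [Fintype F]
    (hcard : Fintype.card F = 2 ^ (2 * m))
    (u : F) (hu1 : u ^ (2 ^ m + 1) = 1)
    (w : F) (hw : w = u + u ^ (2 ^ m))
    (b : F) (a : F)
    (c : F) (hc : c = a ^ (2 ^ (2 * m - 1)) + (b * u ^ (2 ^ m) + (b * u ^ (2 ^ m)) ^ (2 ^ m))) :
    ∀ z : F, z ^ (2 ^ m) = z → z ^ 2 + w * z + 1 ≠ 0 →
      c + (a * w * z) ^ (2 ^ (2 * m - 1)) +
        b * w ^ 2 * (u ^ (2 ^ m) + z) / (u + z) ^ 2 +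
        b ^ (2 ^ m) * w ^ 2 * (u + z) / (u ^ (2 ^ m) + z) ^ 2 =
      a ^ (2 ^ (2 * m - 1)) + (b ^ (2 ^ m) * u ^ 5 + (b ^ (2 ^ m) * u ^ 5) ^ (2 ^ m)) +
        (a * w * z) ^ (2 ^ (2 * m - 1)) +
        ((b ^ (2 ^ m) * (u ^ 5 + u) + (b ^ (2 ^ m) * (u ^ 5 + u)) ^ (2 ^ m)) * z ^ 4 +
          (b + b ^ (2 ^ m)) * w ^ 2 * z ^ 3 +
          (b ^ (2 ^ m) * u ^ 5 + (b ^ (2 ^ m) * u ^ 5) ^ (2 ^ m)) * w ^ 2 * z ^ 2 +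
          (b ^ (2 ^ m) * (u ^ 4 + 1) + (b ^ (2 ^ m) * (u ^ 4 + 1)) ^ (2 ^ m)) * z) /
          (z ^ 2 + w * z + 1) ^ 2 := by
  intro z _ hz
  have : CharP F 2 := charP_of_card_eq_prime_pow hcard
  have hinv : ∀ x : F, (x ^ 2 ^ m) ^ 2 ^ m = x :=
    FiniteField.pow_pow_eq_self_of_card_eq_sq (by rw [hcard, pow_mul'])
  have huv : u * u ^ 2 ^ m = 1 := by rw [← pow_succ']; exact hu1
  have hvu : u ^ 2 ^ m * u = 1 := by rw [mul_comm, huv]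
  obtain ⟨hu, hv⟩ : u + z ≠ 0 ∧ u ^ 2 ^ m + z ≠ 0 := mul_ne_zero_iff.mp <| by
    rwa [hw, show z ^ 2 + (u + u ^ 2 ^ m) * z + 1 = (u + z) * (u ^ 2 ^ m + z) by
      linear_combination -huv] at hz
  simp only [mul_pow, add_pow_expChar_pow, one_pow, pow_right_comm _ 5 (2 ^ m),
    pow_right_comm _ 4 (2 ^ m), hinv, hc, hw]
  linear_combination b * CharTwo.add_sq_mul_div_sq_eq_of_mul_eq_one huv hu hv +
    b ^ 2 ^ m * CharTwo.add_sq_mul_div_sq_eq_of_mul_eq_one hvu hv hu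

/-- Let `n = 2m`, `u ∈ GF(2^n) \ GF(2^m)` with `u^(2^m+1) = 1`, `w = u + u^(2^m)`,
`b ∈ GF(2^n)*`, `a = b^(2^m+1)`, `c = a^(1/2) + Tr^n_m(b·u^(2^m))` (square roots being
`x ↦ x^(2^(2m−1))`). Then for all `z ∈ GF(2^m)` with `z² + wz + 1 ≠ 0`:
`c + (awz)^(1/2) + b w² (u^(2^m) + z)/(u + z)² + b^(2^m) w² (u + z)/(u^(2^m) + z)²
 = a^(1/2) + Tr^n_m(b^(2^m) u⁵) + (awz)^(1/2)
   + [Tr^n_m(b^(2^m)(u⁵+u)) z⁴ + Tr^n_m(b) w² z³ + Tr^n_m(b^(2^m) u⁵) w² z²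
      + Tr^n_m(b^(2^m)(u⁴+1)) z] / (z² + wz + 1)²`. -/
theorem stmt_19 (m : ℕ) (hm : 0 < m) (F : Type*) [Field F] [Fintype F]
    (hcard : Fintype.card F = 2 ^ (2 * m))
    (u : F) (hu1 : u ^ (2 ^ m + 1) = 1) (hu : u ^ (2 ^ m) ≠ u)
    (w : F) (hw : w = u + u ^ (2 ^ m))
    (b : F) (hb : b ≠ 0) (a : F) (ha : a = b ^ (2 ^ m + 1))
    (c : F) (hc : c = a ^ (2 ^ (2 * m - 1)) + (b * u ^ (2 ^ m) + (b * u ^ (2 ^ m)) ^ (2 ^ m))) :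
    ∀ z : F, z ^ (2 ^ m) = z → z ^ 2 + w * z + 1 ≠ 0 →
      c + (a * w * z) ^ (2 ^ (2 * m - 1)) +
        b * w ^ 2 * (u ^ (2 ^ m) + z) / (u + z) ^ 2 +
        b ^ (2 ^ m) * w ^ 2 * (u + z) / (u ^ (2 ^ m) + z) ^ 2 =
      a ^ (2 ^ (2 * m - 1)) + (b ^ (2 ^ m) * u ^ 5 + (b ^ (2 ^ m) * u ^ 5) ^ (2 ^ m)) +
        (a * w * z) ^ (2 ^ (2 * m - 1)) +
        ((b ^ (2 ^ m) * (u ^ 5 + u) + (b ^ (2 ^ m) * (u ^ 5 + u)) ^ (2 ^ m)) * z ^ 4 +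
          (b + b ^ (2 ^ m)) * w ^ 2 * z ^ 3 +
          (b ^ (2 ^ m) * u ^ 5 + (b ^ (2 ^ m) * u ^ 5) ^ (2 ^ m)) * w ^ 2 * z ^ 2 +
          (b ^ (2 ^ m) * (u ^ 4 + 1) + (b ^ (2 ^ m) * (u ^ 4 + 1)) ^ (2 ^ m)) * z) /
          (z ^ 2 + w * z + 1) ^ 2 :=
  stmt_19_general m F hcard u hu1 w hw b a c hc
end
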